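/- The extended word-series product ⊛ defined on pairs by (u, γ) ⊛ (v, δ) = (γ_∅ v + δ_∅ u, γ ⋆ (Ξ_u δ)) makes the set 𝒢̄ = ℂ^d × 𝒢 into a group with unit (0, 𝟙); in particular ⊛ is associative on 𝒢̄ and every element has a two-sided inverse. -/
import Mathlib


/-- Convolution product on `ℂ^𝒲`. -/
noncomputable def conv {A : Type*} (δ δ' : List A → ℂ) (w : List A) : ℂ :=
  ∑ j ∈ Finset.range (w.length + 1), δ (w.take j) * δ' (w.drop j)

/-- The letter-sum of a word over the alphabet `ℤ^d`. -/
def letterSum {d : ℕ} (w : List (Fin d → ℤ)) : Fin d → ℤ :=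
  fun i => (w.map (fun k => k i)).sum

/-- The operator `Ξ_u` on `ℂ^𝒲`:
`(Ξ_u δ)_{𝐤₁⋯𝐤ₙ} = exp(i(𝐤₁+⋯+𝐤ₙ)·u) δ_{𝐤₁⋯𝐤ₙ}` (and `(Ξ_u δ)_∅ = δ_∅`). -/
noncomputable def Xi {d : ℕ} (u : Fin d → ℂ) (δ : List (Fin d → ℤ) → ℂ) :
    List (Fin d → ℤ) → ℂ :=
  fun w => Complex.exp (Complex.I * ∑ i, (letterSum w i : ℂ) * u i) * δ w


/-- The shuffle product of two words: the multiset of all order-preserving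
interleavings of the two words. -/
def shuffle {A : Type*} : List A → List A → Multiset (List A)
  | [], w' => {w'}
  | w, [] => {w}
  | a :: w, b :: w' =>
      (shuffle w (b :: w')).map (a :: ·) + (shuffle (a :: w) w').map (b :: ·)

/-- `γ ∈ ℂ^𝒲` satisfies the shuffle relations. -/
def IsShuffleChar {A : Type*} (γ : List A → ℂ) : Prop :=
  γ [] = 1 ∧ ∀ w w' : List A, γ w * γ w' = ((shuffle w w').map γ).sum

open Classical in
/-- The unit `𝟙` of the convolution product. -/
noncomputable def convUnit {A : Type*} : List A → ℂ :=
  fun w => if w = [] then 1 else 0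

/-- The extended word-series product `⊛` on `ℂ^d × ℂ^𝒲`:
`(u, γ) ⊛ (v, δ) = (γ_∅ v + δ_∅ u, γ ⋆ (Ξ_u δ))`. -/
noncomputable def extProd {d : ℕ}
    (p q : (Fin d → ℂ) × (List (Fin d → ℤ) → ℂ)) :
    (Fin d → ℂ) × (List (Fin d → ℤ) → ℂ) :=
  (p.2 [] • q.1 + q.2 [] • p.1, conv p.2 (Xi p.1 q.2))

theorem conv_nil {A : Type*} (α β : List A → ℂ) : conv α β [] = α [] * β [] := by
  simp [conv]

theorem conv_cons {A : Type*} (α β : List A → ℂ) (a : A) (w : List A) :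
    conv α β (a :: w) = α [] * β (a :: w) + conv (fun s => α (a :: s)) β w := by
  rw [conv, Finset.sum_range_succ']
  simp only [List.take_succ_cons, List.drop_succ_cons, List.take_zero, List.drop_zero]
  rw [add_comm, conv]
  simp [List.length_cons]

theorem conv_add_left {A : Type*} (f g β : List A → ℂ) (w : List A) :
    conv (fun s => f s + g s) β w = conv f β w + conv g β w := by
  simp [conv, add_mul, Finset.sum_add_distrib]

theorem conv_mul_left {A : Type*} (c : ℂ) (f β : List A → ℂ) (w : List A) :
    conv (fun s => c * f s) β w = c * conv f β w := by
  simp [conv, mul_assoc, Finset.mul_sum]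

theorem conv_assoc {A : Type*} : ∀ (w : List A) (α β γ : List A → ℂ),
    conv (conv α β) γ w = conv α (conv β γ) w
  | [], α, β, γ => by simp [conv, mul_assoc]
  | a :: w, α, β, γ => by
      rw [conv_cons, conv_cons, conv_nil, conv_cons]
      have h : (fun s => conv α β (a :: s)) =
          fun s => α [] * β (a :: s) + conv (fun t => α (a :: t)) β s := by
        funext s; rw [conv_cons]
      rw [h, conv_add_left, conv_mul_left, conv_assoc w (fun t => α (a :: t)) β γ]
      ring

theorem conv_zero_left {A : Type*} (β : List A → ℂ) (w : List A) :
    conv (fun _ => 0) β w = 0 := by simp [conv]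

theorem conv_unit_left {A : Type*} (β : List A → ℂ) : conv convUnit β = β := by
  funext w
  cases w with
  | nil => simp [conv, convUnit]
  | cons a w =>
      rw [conv_cons]
      have : (fun s => convUnit (a :: s)) = (fun _ : List A => (0:ℂ)) := by
        funext s; simp [convUnit]
      rw [this, conv_zero_left]
      simp [convUnit]

theorem conv_unit_right {A : Type*} (β : List A → ℂ) : conv β convUnit = β := by
  funext w
  rw [conv, Finset.sum_eq_single w.length]
  · simp [convUnit]
  · intro b hb hne
    have hlt : b < w.length := by
      have := Finset.mem_range.1 hb
      omega
    have : w.drop b ≠ [] := by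
      simp [List.drop_eq_nil_iff]
      omega
    simp [convUnit, this]
  · intro h
    exact absurd (Finset.self_mem_range_succ w.length) h

@[simp] theorem shuffle_nil_left {A : Type*} (w : List A) : shuffle [] w = {w} := by
  cases w <;> simp [shuffle]

@[simp] theorem shuffle_nil_right {A : Type*} (w : List A) : shuffle w [] = {w} := by
  cases w <;> simp [shuffle]

theorem shuffle_cons_cons {A : Type*} (a b : A) (w w' : List A) :
    shuffle (a :: w) (b :: w') =
      (shuffle w (b :: w')).map (a :: ·) + (shuffle (a :: w) w').map (b :: ·) := by
  simp [shuffle]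

theorem mem_shuffle_perm {A : Type*} : ∀ (w w' s : List A), s ∈ shuffle w w' →
    s.Perm (w ++ w')
  | [], w', s, hs => by simp_all
  | a :: w, [], s, hs => by simp_all
  | a :: w, b :: w', s, hs => by
      rw [shuffle_cons_cons] at hs
      rcases Multiset.mem_add.1 hs with h | h <;> rw [Multiset.mem_map] at h <;>
        obtain ⟨t, ht, rfl⟩ := h
      · exact (mem_shuffle_perm w (b :: w') t ht).cons a
      · exact ((mem_shuffle_perm (a :: w) w' t ht).cons b).trans List.perm_middle.symm

theorem shuffle_comm {A : Type*} : ∀ (w w' : List A), shuffle w w' = shuffle w' w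
  | [], w' => by simp
  | a :: w, [] => by simp
  | a :: w, b :: w' => by
      rw [shuffle_cons_cons, shuffle_cons_cons b a, shuffle_comm w (b :: w'),
        shuffle_comm (a :: w) w', add_comm]

theorem shuffle_snoc {A : Type*} (a b : A) : ∀ (u v : List A),
    shuffle (u ++ [a]) (v ++ [b]) =
      (shuffle u (v ++ [b])).map (· ++ [a]) + (shuffle (u ++ [a]) v).map (· ++ [b])
  | [], [] => by
      simp only [List.nil_append, shuffle_cons_cons, shuffle_nil_left, shuffle_nil_right]
      simp only [Multiset.map_singleton, List.singleton_append, List.cons_append, List.nil_append]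
      exact add_comm _ _
  | [], y :: v' => by
      have IH := shuffle_snoc a b [] v'
      simp only [List.cons_append, List.nil_append] at IH ⊢
      rw [shuffle_cons_cons, IH, shuffle_cons_cons a y [] v']
      simp only [shuffle_nil_left, Multiset.map_add, Multiset.map_map, Multiset.map_singleton,
        Function.comp_def, List.cons_append]
      abel
  | x :: u', [] => by
      have IH := shuffle_snoc a b u' []
      simp only [List.cons_append, List.nil_append] at IH ⊢
      rw [shuffle_cons_cons, IH, shuffle_cons_cons x b u' []]
      simp only [shuffle_nil_right, Multiset.map_add, Multiset.map_map, Multiset.map_singleton,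
        Function.comp_def, List.cons_append]
      abel
  | x :: u', y :: v' => by
      have IH1 := shuffle_snoc a b u' (y :: v')
      have IH2 := shuffle_snoc a b (x :: u') v'
      simp only [List.cons_append, List.nil_append] at IH1 IH2 ⊢
      rw [shuffle_cons_cons, IH1, IH2, shuffle_cons_cons x y u' (v' ++ [b]),
        shuffle_cons_cons x y (u' ++ [a]) v']
      simp only [Multiset.map_add, Multiset.map_map, Function.comp_def, List.cons_append]
      abel

theorem shuffle_reverse {A : Type*} : ∀ (w w' : List A),
    (shuffle w w').map List.reverse = shuffle w.reverse w'.reverse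
  | [], w' => by simp
  | a :: w, [] => by simp
  | a :: w, b :: w' => by
      rw [shuffle_cons_cons, Multiset.map_add, Multiset.map_map, Multiset.map_map]
      have h1 : List.reverse ∘ (a :: ·) = (fun s => s ++ [a]) ∘ (List.reverse (α := A)) := by
        funext s; simp
      have h2 : List.reverse ∘ (b :: ·) = (fun s => s ++ [b]) ∘ (List.reverse (α := A)) := by
        funext s; simp
      rw [h1, h2, ← Multiset.map_map, ← Multiset.map_map,
        shuffle_reverse w (b :: w'), shuffle_reverse (a :: w) w']
      simp only [List.reverse_cons]
      rw [shuffle_snoc a b]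

theorem sum_split_key (F A B : ℕ → ℕ → ℂ) (n n' : ℕ)
    (hF : ∀ i i', F (i+1) (i'+1) = A i (i'+1) + B (i+1) i')
    (hA0 : ∀ i, F (i+1) 0 = A i 0)
    (hB0 : ∀ i', F 0 (i'+1) = B 0 i') :
    ∑ j ∈ Finset.range (n+2), ∑ j' ∈ Finset.range (n'+2), F j j'
      = (∑ i ∈ Finset.range (n+1), ∑ j' ∈ Finset.range (n'+2), A i j')
        + (∑ j ∈ Finset.range (n+2), ∑ i' ∈ Finset.range (n'+1), B j i') + F 0 0 := by
  have peel : ∀ (G : ℕ → ℕ → ℂ) (m m' : ℕ),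
      ∑ j ∈ Finset.range (m+1), ∑ j' ∈ Finset.range (m'+1), G j j'
        = ((∑ i ∈ Finset.range m, ∑ i' ∈ Finset.range m', G (i+1) (i'+1))
          + (∑ i ∈ Finset.range m, G (i+1) 0))
          + ((∑ i' ∈ Finset.range m', G 0 (i'+1)) + G 0 0) := by
    intro G m m'
    have h1 : ∀ j, ∑ j' ∈ Finset.range (m'+1), G j j'
        = (∑ i' ∈ Finset.range m', G j (i'+1)) + G j 0 :=
      fun j => Finset.sum_range_succ' _ _
    rw [Finset.sum_range_succ' (fun j => ∑ j' ∈ Finset.range (m'+1), G j j') m]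
    simp only [h1, Finset.sum_add_distrib]
  have hA' : ∑ i ∈ Finset.range (n+1), ∑ j' ∈ Finset.range (n'+2), A i j'
      = (∑ i ∈ Finset.range (n+1), ∑ i' ∈ Finset.range (n'+1), A i (i'+1))
        + ∑ i ∈ Finset.range (n+1), A i 0 := by
    have h1 : ∀ i, ∑ j' ∈ Finset.range (n'+2), A i j'
        = (∑ i' ∈ Finset.range (n'+1), A i (i'+1)) + A i 0 :=
      fun i => Finset.sum_range_succ' _ _
    simp only [h1, Finset.sum_add_distrib]
  have hB' : ∑ j ∈ Finset.range (n+2), ∑ i' ∈ Finset.range (n'+1), B j i'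
      = (∑ i ∈ Finset.range (n+1), ∑ i' ∈ Finset.range (n'+1), B (i+1) i')
        + ∑ i' ∈ Finset.range (n'+1), B 0 i' :=
    Finset.sum_range_succ' _ _
  rw [peel F (n+1) (n'+1), hA', hB']
  simp only [hF, hA0, hB0, Finset.sum_add_distrib]
  ring

theorem shuffle_conv {A : Type*} : ∀ (w w' : List A) (γ δ : List A → ℂ),
    ((shuffle w w').map (conv γ δ)).sum =
      ∑ j ∈ Finset.range (w.length + 1), ∑ j' ∈ Finset.range (w'.length + 1),
        ((shuffle (w.take j) (w'.take j')).map γ).sum *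
          ((shuffle (w.drop j) (w'.drop j')).map δ).sum
  | [], w', γ, δ => by
      simp [conv]
  | a :: w, [], γ, δ => by
      simp [conv]
  | a :: w, b :: w', γ, δ => by
      have IH1 := shuffle_conv w (b :: w') (fun s => γ (a :: s)) δ
      have IH2 := shuffle_conv (a :: w) w' (fun s => γ (b :: s)) δ
      -- RHS rewriting via sum_split_key
      have hkey := sum_split_key
        (fun j j' => ((shuffle ((a :: w).take j) ((b :: w').take j')).map γ).sum *
          ((shuffle ((a :: w).drop j) ((b :: w').drop j')).map δ).sum)
        (fun i j' => ((shuffle (w.take i) ((b :: w').take j')).map (fun s => γ (a :: s))).sum *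
          ((shuffle (w.drop i) ((b :: w').drop j')).map δ).sum)
        (fun j i' => ((shuffle ((a :: w).take j) (w'.take i')).map (fun s => γ (b :: s))).sum *
          ((shuffle ((a :: w).drop j) (w'.drop i')).map δ).sum)
        w.length w'.length
        (by
          intro i i'
          simp only [List.take_succ_cons, List.drop_succ_cons, shuffle_cons_cons,
            Multiset.map_add, Multiset.sum_add, Multiset.map_map, Function.comp_def, add_mul])
        (by
          intro i
          simp only [List.take_succ_cons, List.drop_succ_cons, List.take_zero, List.drop_zero,
            shuffle_nil_right, Multiset.map_singleton, Multiset.sum_singleton])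
        (by
          intro i'
          simp only [List.take_succ_cons, List.drop_succ_cons, List.take_zero, List.drop_zero,
            shuffle_nil_left, Multiset.map_singleton, Multiset.sum_singleton])
      simp only [List.length_cons] at hkey IH1 IH2 ⊢
      rw [hkey, ← IH1, ← IH2]
      -- now handle LHS
      rw [shuffle_cons_cons, Multiset.map_add, Multiset.sum_add, Multiset.map_map,
        Multiset.map_map]
      have e1 : ((shuffle w (b :: w')).map (conv γ δ ∘ (a :: ·))).sum
          = γ [] * ((shuffle w (b :: w')).map (fun s => δ (a :: s))).sum
            + ((shuffle w (b :: w')).map (conv (fun t => γ (a :: t)) δ)).sum := by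
        rw [← Multiset.sum_map_mul_left, ← Multiset.sum_map_add]
        congr 1
        exact Multiset.map_congr rfl fun s _ => conv_cons γ δ a s
      have e2 : ((shuffle (a :: w) w').map (conv γ δ ∘ (b :: ·))).sum
          = γ [] * ((shuffle (a :: w) w').map (fun s => δ (b :: s))).sum
            + ((shuffle (a :: w) w').map (conv (fun t => γ (b :: t)) δ)).sum := by
        rw [← Multiset.sum_map_mul_left, ← Multiset.sum_map_add]
        congr 1
        exact Multiset.map_congr rfl fun s _ => conv_cons γ δ b s
      rw [e1, e2]
      have e3 : ((shuffle ((a :: w).take 0) ((b :: w').take 0)).map γ).sum *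
          ((shuffle ((a :: w).drop 0) ((b :: w').drop 0)).map δ).sum
          = γ [] * (((shuffle w (b :: w')).map (fun s => δ (a :: s))).sum
            + ((shuffle (a :: w) w').map (fun s => δ (b :: s))).sum) := by
        simp only [List.take_zero, List.drop_zero, shuffle_nil_left, Multiset.map_singleton,
          Multiset.sum_singleton, shuffle_cons_cons, Multiset.map_add, Multiset.sum_add,
          Multiset.map_map, Function.comp_def]
      rw [e3]
      ring

theorem antipode_sum {A : Type*} : ∀ (n : ℕ) (w : List A), w.length = n → w ≠ [] →
    ∀ (f : List A → ℂ),
    ∑ j ∈ Finset.range (w.length + 1),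
      (-1 : ℂ) ^ j * ((shuffle (w.take j) ((w.drop j).reverse)).map f).sum = 0 := by
  intro n
  induction n using Nat.strong_induction_on with
  | _ n IH =>
    intro w hlen hne f
    obtain ⟨a, t, rfl⟩ : ∃ a t, w = a :: t := by
      cases w with
      | nil => exact absurd rfl hne
      | cons a t => exact ⟨a, t, rfl⟩
    by_cases ht : t = []
    · subst ht
      simp [Finset.sum_range_succ]
    · -- t ≠ []
      have htlen : t.length < n := by simp at hlen; omega
      have hwlen : (a :: t).length = t.length + 1 := rfl
      set z := t.getLast ht with hz
      set tt := t.dropLast with htt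
      have htz : t = tt ++ [z] := (List.dropLast_append_getLast ht).symm
      have httlen : tt.length = t.length - 1 := by rw [htt]; simp
      -- decomposition of the middle/last terms
      have hdec : ∀ i ∈ Finset.range (t.length + 1),
          shuffle ((a :: t).take (i + 1)) (((a :: t).drop (i + 1)).reverse)
            = (shuffle (t.take i) ((t.drop i).reverse)).map (a :: ·)
              + (if i + 1 ≤ t.length then
                  (shuffle ((a :: tt).take (i + 1)) (((a :: tt).drop (i + 1)).reverse)).map
                    (z :: ·)
                else 0) := by
        intro i hi
        rw [Finset.mem_range] at hi
        simp only [List.take_succ_cons, List.drop_succ_cons]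
        by_cases hile : i + 1 ≤ t.length
        · have hi' : i ≤ tt.length := by omega
          have hdrop : t.drop i = tt.drop i ++ [z] := by
            conv_lhs => rw [htz]
            rw [List.drop_append_of_le_length hi']
          have htake : t.take i = tt.take i := by
            conv_lhs => rw [htz]
            rw [List.take_append_of_le_length hi']
          have hrev : (t.drop i).reverse = z :: (tt.drop i).reverse := by
            rw [hdrop]; simp
          rw [hrev, shuffle_cons_cons, ← hrev, if_pos hile]
          congr 1
          rw [htake]
        · have hieq : i = t.length := by omega
          subst hieq
          simp [if_neg hile]
      -- peel off j = 0
      rw [Finset.sum_range_succ' _ ((a :: t).length)]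
      simp only [hwlen]
      -- rewrite middle terms
      rw [Finset.sum_congr rfl fun i hi => by
        rw [hdec i hi, Multiset.map_add, Multiset.sum_add, mul_add]]
      rw [Finset.sum_add_distrib]
      -- a-part vanishes by IH on t
      have hapart : ∑ i ∈ Finset.range (t.length + 1),
          (-1 : ℂ) ^ (i + 1) *
            ((Multiset.map (a :: ·) (shuffle (t.take i) ((t.drop i).reverse))).map f).sum = 0 := by
        have := IH t.length htlen t rfl ht (fun s => f (a :: s))
        have h2 : ∀ i, (-1 : ℂ) ^ (i + 1) *
            ((Multiset.map (a :: ·) (shuffle (t.take i) ((t.drop i).reverse))).map f).sum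
            = -((-1 : ℂ) ^ i *
              ((shuffle (t.take i) ((t.drop i).reverse)).map (fun s => f (a :: s))).sum) := by
          intro i
          rw [Multiset.map_map]
          simp only [Function.comp_def, pow_succ]
          ring
        simp only [h2, Finset.sum_neg_distrib, this, neg_zero]
      rw [hapart, zero_add]
      -- z-part vanishes by IH on a :: tt
      have hztne : (a :: tt) ≠ [] := by simp
      have hztlen : (a :: tt).length = t.length := by
        simp only [List.length_cons, httlen]
        have : 1 ≤ t.length := List.length_pos_iff.2 ht
        omega
      have hztlt : (a :: tt).length < n := by rw [hztlen]; omega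
      have hzIH := IH (a :: tt).length hztlt (a :: tt) rfl hztne (fun s => f (z :: s))
      rw [hztlen] at hzIH
      -- assemble z-terms: j = 0 term plus the ifs
      have hj0 : (-1 : ℂ) ^ (0:ℕ) *
          ((shuffle ((a :: t).take 0) (((a :: t).drop 0).reverse)).map f).sum
          = (-1 : ℂ) ^ (0:ℕ) * ((shuffle ((a :: tt).take 0) (((a :: tt).drop 0).reverse)).map
              (fun s => f (z :: s))).sum := by
        simp only [List.take_zero, List.drop_zero, shuffle_nil_left, Multiset.map_singleton,
          Multiset.sum_singleton]
        have : (a :: t).reverse = z :: (a :: tt).reverse := by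
          conv_lhs => rw [show a :: t = (a :: tt) ++ [z] by rw [List.cons_append, ← htz]]
          simp
        rw [this]
      have hzifs : ∑ i ∈ Finset.range (t.length + 1),
          (-1 : ℂ) ^ (i + 1) *
            ((if i + 1 ≤ t.length then
                (shuffle ((a :: tt).take (i + 1)) (((a :: tt).drop (i + 1)).reverse)).map
                  (z :: ·)
              else 0).map f).sum
          = ∑ i ∈ Finset.range t.length, (-1 : ℂ) ^ (i + 1) *
              ((shuffle ((a :: tt).take (i + 1)) (((a :: tt).drop (i + 1)).reverse)).map
                (fun s => f (z :: s))).sum := by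
        rw [Finset.sum_range_succ]
        simp only [Nat.lt_irrefl, if_neg (by omega : ¬ (t.length + 1 ≤ t.length))]
        simp only [Multiset.map_zero, Multiset.sum_zero, mul_zero, add_zero]
        refine Finset.sum_congr rfl fun i hi => ?_
        rw [Finset.mem_range] at hi
        rw [if_pos (by omega), Multiset.map_map]
        simp [Function.comp_def]
      rw [hzifs, hj0]
      rw [Finset.sum_range_succ' _ t.length] at hzIH
      exact hzIH

noncomputable def antip {A : Type*} (γ : List A → ℂ) : List A → ℂ :=
  fun w => (-1 : ℂ) ^ w.length * γ w.reverse

theorem length_of_mem_shuffle {A : Type*} {w w' s : List A} (h : s ∈ shuffle w w') :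
    s.length = w.length + w'.length := by
  have := (mem_shuffle_perm w w' s h).length_eq
  simpa using this

theorem isShuffleChar'_conv {A : Type*} {γ δ : List A → ℂ}
    (hγ : IsShuffleChar γ) (hδ : IsShuffleChar δ) : IsShuffleChar (conv γ δ) := by
  constructor
  · rw [conv_nil, hγ.1, hδ.1, one_mul]
  · intro w w'
    rw [shuffle_conv]
    rw [Finset.sum_congr rfl fun j _ => Finset.sum_congr rfl fun j' _ => by
      rw [← hγ.2, ← hδ.2]]
    rw [conv, conv, Finset.sum_mul_sum]
    exact Finset.sum_congr rfl fun j _ => Finset.sum_congr rfl fun j' _ => by ring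

theorem isShuffleChar'_antip {A : Type*} {γ : List A → ℂ}
    (hγ : IsShuffleChar γ) : IsShuffleChar (antip γ) := by
  constructor
  · simp [antip, hγ.1]
  · intro w w'
    have h1 : antip γ w * antip γ w'
        = (-1 : ℂ) ^ (w.length + w'.length) * (γ w.reverse * γ w'.reverse) := by
      simp [antip, pow_add]; ring
    rw [h1, hγ.2, ← shuffle_reverse, Multiset.map_map, ← Multiset.sum_map_mul_left]
    refine congrArg Multiset.sum (Multiset.map_congr rfl fun s hs => ?_)
    simp only [Function.comp_def, antip]
    rw [length_of_mem_shuffle hs]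

theorem conv_antip_right {A : Type*} {γ : List A → ℂ}
    (hγ : IsShuffleChar γ) : conv γ (antip γ) = convUnit := by
  funext w
  cases w with
  | nil => simp [conv_nil, antip, hγ.1, convUnit]
  | cons a t =>
    have hne : (a :: t) ≠ [] := by simp
    set w := a :: t
    have key := antipode_sum w.length w rfl hne γ
    have hterm : ∀ j ∈ Finset.range (w.length + 1),
        γ (w.take j) * antip γ (w.drop j)
          = (-1 : ℂ) ^ w.length * ((-1 : ℂ) ^ j *
              ((shuffle (w.take j) ((w.drop j).reverse)).map γ).sum) := by
      intro j hj
      rw [Finset.mem_range] at hj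
      rw [← hγ.2]
      simp only [antip, List.length_drop]
      have hpow : (-1 : ℂ) ^ (w.length - j) = (-1 : ℂ) ^ w.length * (-1 : ℂ) ^ j := by
        rw [← pow_add, show w.length + j = (w.length - j) + 2 * j by omega, pow_add, pow_mul]
        norm_num
      rw [hpow]; ring
    rw [conv, Finset.sum_congr rfl hterm, ← Finset.mul_sum, key, mul_zero]
    simp [convUnit]

theorem antip_antip {A : Type*} (γ : List A → ℂ) : antip (antip γ) = γ := by
  funext w
  simp only [antip, List.length_reverse, List.reverse_reverse, ← mul_assoc, ← mul_pow]
  norm_num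

theorem conv_antip_left {A : Type*} {γ : List A → ℂ}
    (hγ : IsShuffleChar γ) : conv (antip γ) γ = convUnit := by
  have := conv_antip_right (isShuffleChar'_antip hγ)
  rwa [antip_antip] at this

theorem letterSum_append {d : ℕ} (u v : List (Fin d → ℤ)) (i : Fin d) :
    letterSum (u ++ v) i = letterSum u i + letterSum v i := by
  simp [letterSum]

theorem letterSum_of_mem_shuffle {d : ℕ} {w w' s : List (Fin d → ℤ)}
    (h : s ∈ shuffle w w') (i : Fin d) : letterSum s i = letterSum w i + letterSum w' i := by
  have hp := (mem_shuffle_perm w w' s h).map (fun k => k i)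
  rw [letterSum, letterSum, letterSum, hp.sum_eq]
  simp

theorem Xi_nil {d : ℕ} (u : Fin d → ℂ) (δ : List (Fin d → ℤ) → ℂ) :
    Xi u δ [] = δ [] := by
  simp [Xi, letterSum]

theorem Xi_take_drop {d : ℕ} (u : Fin d → ℂ) (w : List (Fin d → ℤ)) (j : ℕ) :
    (Complex.I * ∑ i, (letterSum (w.take j) i : ℂ) * u i)
      + (Complex.I * ∑ i, (letterSum (w.drop j) i : ℂ) * u i)
      = Complex.I * ∑ i, (letterSum w i : ℂ) * u i := by
  rw [← mul_add, ← Finset.sum_add_distrib]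
  congr 1
  refine Finset.sum_congr rfl fun i _ => ?_
  have : letterSum (w.take j) i + letterSum (w.drop j) i = letterSum w i := by
    conv_rhs => rw [← List.take_append_drop j w]
    rw [letterSum_append]
  push_cast [← this]
  ring

theorem Xi_conv {d : ℕ} (u : Fin d → ℂ) (γ δ : List (Fin d → ℤ) → ℂ) :
    Xi u (conv γ δ) = conv (Xi u γ) (Xi u δ) := by
  funext w
  simp only [Xi, conv]
  rw [Finset.mul_sum]
  refine Finset.sum_congr rfl fun j _ => ?_
  rw [← Xi_take_drop u w j, Complex.exp_add]
  ring

theorem Xi_Xi {d : ℕ} (u v : Fin d → ℂ) (δ : List (Fin d → ℤ) → ℂ) :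
    Xi u (Xi v δ) = Xi (u + v) δ := by
  funext w
  simp only [Xi, ← mul_assoc, ← Complex.exp_add]
  congr 2
  rw [← mul_add, ← Finset.sum_add_distrib]
  congr 1
  refine Finset.sum_congr rfl fun i _ => ?_
  simp [Pi.add_apply]
  ring

theorem Xi_zero {d : ℕ} (δ : List (Fin d → ℤ) → ℂ) : Xi 0 δ = δ := by
  funext w
  simp [Xi]

theorem Xi_unit {d : ℕ} (u : Fin d → ℂ) : Xi u (convUnit (A := Fin d → ℤ)) = convUnit := by
  funext w
  by_cases h : w = []
  · subst h; exact Xi_nil u convUnit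
  · simp [Xi, convUnit, h]

theorem isShuffleChar'_Xi {d : ℕ} {δ : List (Fin d → ℤ) → ℂ} (u : Fin d → ℂ)
    (hδ : IsShuffleChar δ) : IsShuffleChar (Xi u δ) := by
  constructor
  · rw [Xi_nil, hδ.1]
  · intro w w'
    have h1 : Xi u δ w * Xi u δ w'
        = Complex.exp ((Complex.I * ∑ i, (letterSum w i : ℂ) * u i)
            + (Complex.I * ∑ i, (letterSum w' i : ℂ) * u i)) * (δ w * δ w') := by
      rw [Complex.exp_add]; simp only [Xi]; ring
    rw [h1, hδ.2, ← Multiset.sum_map_mul_left]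
    refine congrArg Multiset.sum (Multiset.map_congr rfl fun s hs => ?_)
    simp only [Xi]
    congr 2
    rw [← mul_add, ← Finset.sum_add_distrib]
    congr 1
    refine Finset.sum_congr rfl fun i _ => ?_
    rw [letterSum_of_mem_shuffle hs]
    push_cast
    ring

theorem extProd_group_aux {d : ℕ} :
    (∀ p q : (Fin d → ℂ) × (List (Fin d → ℤ) → ℂ),
      IsShuffleChar p.2 → IsShuffleChar q.2 → IsShuffleChar (extProd p q).2) ∧
    (∀ p q r : (Fin d → ℂ) × (List (Fin d → ℤ) → ℂ),
      IsShuffleChar p.2 → IsShuffleChar q.2 → IsShuffleChar r.2 →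
      extProd (extProd p q) r = extProd p (extProd q r)) ∧
    (∀ p : (Fin d → ℂ) × (List (Fin d → ℤ) → ℂ), IsShuffleChar p.2 →
      extProd (0, convUnit) p = p ∧ extProd p (0, convUnit) = p) ∧
    (∀ p : (Fin d → ℂ) × (List (Fin d → ℤ) → ℂ), IsShuffleChar p.2 →
      ∃ q : (Fin d → ℂ) × (List (Fin d → ℤ) → ℂ), IsShuffleChar q.2 ∧
        extProd p q = (0, convUnit) ∧ extProd q p = (0, convUnit)) := by
  have hXichar : ∀ (u : Fin d → ℂ) (δ : List (Fin d → ℤ) → ℂ), IsShuffleChar δ →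
      IsShuffleChar (Xi u δ) := fun u δ h => isShuffleChar'_Xi u h
  refine ⟨?_, ?_, ?_, ?_⟩
  · intro p q hp hq
    exact isShuffleChar'_conv hp (isShuffleChar'_Xi p.1 hq)
  · intro p q r hp hq hr
    have hpq2 : (extProd p q).2 [] = 1 := by
      simp only [extProd, conv_nil, Xi_nil, hp.1, hq.1, one_mul]
    have hqr2 : (extProd q r).2 [] = 1 := by
      simp only [extProd, conv_nil, Xi_nil, hq.1, hr.1, one_mul]
    have hpq1 : (extProd p q).1 = q.1 + p.1 := by
      simp only [extProd, hp.1, hq.1, one_smul]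
    have hqr1 : (extProd q r).1 = r.1 + q.1 := by
      simp only [extProd, hq.1, hr.1, one_smul]
    refine Prod.ext ?_ ?_
    · show (extProd p q).2 [] • r.1 + r.2 [] • (extProd p q).1
        = p.2 [] • (extProd q r).1 + (extProd q r).2 [] • p.1
      rw [hpq2, hqr2, hpq1, hqr1, hp.1, hr.1]
      simp only [one_smul]
      abel
    · show conv (extProd p q).2 (Xi (extProd p q).1 r.2)
        = conv p.2 (Xi p.1 (extProd q r).2)
      rw [hpq1]
      show conv (conv p.2 (Xi p.1 q.2)) (Xi (q.1 + p.1) r.2)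
        = conv p.2 (Xi p.1 (conv q.2 (Xi q.1 r.2)))
      rw [Xi_conv, Xi_Xi, add_comm q.1 p.1]
      funext w
      exact conv_assoc w _ _ _
  · intro p hp
    have hu : convUnit (A := Fin d → ℤ) [] = 1 := by simp [convUnit]
    constructor
    · refine Prod.ext ?_ ?_
      · show convUnit (A := Fin d → ℤ) [] • p.1 + p.2 [] • (0 : Fin d → ℂ) = p.1
        rw [hu, hp.1, one_smul, one_smul]
        simp
      · show conv convUnit (Xi 0 p.2) = p.2
        rw [Xi_zero, conv_unit_left]
    · refine Prod.ext ?_ ?_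
      · show p.2 [] • (0 : Fin d → ℂ) + convUnit (A := Fin d → ℤ) [] • p.1 = p.1
        rw [hu, hp.1, one_smul, one_smul]
        simp
      · show conv p.2 (Xi p.1 convUnit) = p.2
        rw [Xi_unit, conv_unit_right]
  · intro p hp
    refine ⟨(-p.1, Xi (-p.1) (antip p.2)), isShuffleChar'_Xi _ (isShuffleChar'_antip hp), ?_, ?_⟩
    · have h1 : Xi (-p.1) (antip p.2) [] = 1 := by
        rw [Xi_nil]; simp [antip, hp.1]
      refine Prod.ext ?_ ?_
      · show p.2 [] • (-p.1) + Xi (-p.1) (antip p.2) [] • p.1 = 0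
        rw [hp.1, h1, one_smul, one_smul, neg_add_cancel]
      · show conv p.2 (Xi p.1 (Xi (-p.1) (antip p.2))) = convUnit
        rw [Xi_Xi, add_neg_cancel, Xi_zero]
        exact conv_antip_right hp
    · have h1 : Xi (-p.1) (antip p.2) [] = 1 := by
        rw [Xi_nil]; simp [antip, hp.1]
      refine Prod.ext ?_ ?_
      · show Xi (-p.1) (antip p.2) [] • p.1 + p.2 [] • (-p.1) = 0
        rw [hp.1, h1, one_smul, one_smul, add_neg_cancel]
      · show conv (Xi (-p.1) (antip p.2)) (Xi (-p.1) p.2) = convUnit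
        rw [← Xi_conv, conv_antip_left hp, Xi_unit]


/-- `𝒢̄ = ℂ^d × 𝒢` is a group under `⊛` with unit `(0, 𝟙)`: it is closed
under `⊛`, the product is associative, `(0, 𝟙)` is a two-sided unit, and
every element has a two-sided inverse in `𝒢̄`. -/
theorem extProd_group {d : ℕ} :
    (∀ p q : (Fin d → ℂ) × (List (Fin d → ℤ) → ℂ),
      IsShuffleChar p.2 → IsShuffleChar q.2 → IsShuffleChar (extProd p q).2) ∧
    (∀ p q r : (Fin d → ℂ) × (List (Fin d → ℤ) → ℂ),
      IsShuffleChar p.2 → IsShuffleChar q.2 → IsShuffleChar r.2 →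
      extProd (extProd p q) r = extProd p (extProd q r)) ∧
    (∀ p : (Fin d → ℂ) × (List (Fin d → ℤ) → ℂ), IsShuffleChar p.2 →
      extProd (0, convUnit) p = p ∧ extProd p (0, convUnit) = p) ∧
    (∀ p : (Fin d → ℂ) × (List (Fin d → ℤ) → ℂ), IsShuffleChar p.2 →
      ∃ q : (Fin d → ℂ) × (List (Fin d → ℤ) → ℂ), IsShuffleChar q.2 ∧
        extProd p q = (0, convUnit) ∧ extProd q p = (0, convUnit)) := extProd_group_aux
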